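/- In the P system Π₁ of Theorem 1 (size (1,1,0;2,0,0), 5 membranes) simulating a rule i: AB → AC of a Penttonen normal form grammar, starting from the string w₁ A B w₂ in the skin membrane with no marker symbols P_i^j present, there is a derivation w₁ABw₂ ⟹ w₁AP¹_iBw₂ ⟹ w₁AP¹_iP²_iBw₂ ⟹ w₁AP¹_iw₂ ⟹ w₁AP¹_iP³_iw₂ ⟹ w₁AP¹_iP³_iCw₂ ⟹ w₁ACw₂ that moves through membranes 1→2→3→4→3→2→1 and returns w₁ACw₂ to the skin membrane. -/

import Mathlib

inductive Tar where
  | here | inn | out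
deriving DecidableEq

/-- A rule of an insertion-deletion P system: contexts, the inserted/deleted
string, a flag (`true` = insertion, `false` = deletion) and a target. -/
structure PRule (V : Type) where
  lctx : List V
  rctx : List V
  str  : List V
  isIns : Bool
  tar : Tar

/-- Insertion rule `(u, α, v; tar)_a`. -/
def iRule {V : Type} (u α v : List V) (t : Tar) : PRule V := ⟨u, v, α, true, t⟩

/-- Deletion rule `(u, α, v; tar)_e`. -/
def dRule {V : Type} (u α v : List V) (t : Tar) : PRule V := ⟨u, v, α, false, t⟩

/-- `r.applies x y` : applying rule `r` to the string `x` can produce `y`. -/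
def PRule.applies {V : Type} (r : PRule V) (x y : List V) : Prop :=
  if r.isIns then
    ∃ x₁ x₂, x = x₁ ++ r.lctx ++ r.rctx ++ x₂ ∧
             y = x₁ ++ r.lctx ++ r.str ++ r.rctx ++ x₂
  else
    ∃ x₁ x₂, x = x₁ ++ r.lctx ++ r.str ++ r.rctx ++ x₂ ∧
             y = x₁ ++ r.lctx ++ r.rctx ++ x₂

/-- Size condition `(n,m,m';p,q,q')` on a rule. -/
def PRule.sizeOk {V : Type} (n m m' p q q' : ℕ) (r : PRule V) : Prop :=
  if r.isIns then r.str.length ≤ n ∧ r.lctx.length ≤ m ∧ r.rctx.length ≤ m'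
  else r.str.length ≤ p ∧ r.lctx.length ≤ q ∧ r.rctx.length ≤ q'

/-- An insertion-deletion P system with `k` linearly nested membranes
(region `0` is the skin membrane, region `i+1` is immediately inside region `i`),
terminal alphabet `T ⊆ V`, initial languages `M i` and rule sets `R i`. -/
structure PSys (V : Type) (k : ℕ) where
  T : Set V
  M : Fin k → Set (List V)
  R : Fin k → Set (PRule V)

/-- The region where a string produced in region `i` with target `t` is placed;
`none` means the string leaves the system (target `out` in the skin membrane). -/
def tarRegion {k : ℕ} (i : Fin k) : Tar → Option (Fin k)
  | Tar.here => some i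
  | Tar.inn => if h : i.val + 1 < k then some ⟨i.val + 1, h⟩ else none
  | Tar.out =>
      if 0 < i.val then some ⟨i.val - 1, Nat.lt_of_le_of_lt (Nat.sub_le _ _) i.isLt⟩
      else none

/-- `InReg Sys i w` : during some computation of `Sys`, the string `w` appears in
region `i` (strings persist in arbitrarily many copies, so reachability is the
appropriate semantics). -/
inductive InReg {V : Type} {k : ℕ} (Sys : PSys V k) : Fin k → List V → Prop where
  | init {i : Fin k} {w : List V} : w ∈ Sys.M i → InReg Sys i w
  | step {i j : Fin k} {w w' : List V} (r : PRule V) :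
      InReg Sys i w → r ∈ Sys.R i → r.applies w w' → tarRegion i r.tar = some j →
      InReg Sys j w'

/-- The language generated by `Sys`: all terminal strings sent out of the skin
membrane at any time during a computation. -/
def PLang {V : Type} {k : ℕ} (Sys : PSys V k) : Set (List V) :=
  {w | (∀ a ∈ w, a ∈ Sys.T) ∧
    ∃ (i : Fin k) (w' : List V) (r : PRule V),
      InReg Sys i w' ∧ i.val = 0 ∧ r ∈ Sys.R i ∧ r.tar = Tar.out ∧ r.applies w' w}

namespace InReg

variable {V : Type} {k : ℕ} {Sys : PSys V k} {i j : Fin k} {w w' x₁ x₂ u α v : List V} {t : Tar}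

theorem insert (hw : InReg Sys i w) (hr : iRule u α v t ∈ Sys.R i)
    (ht : tarRegion i t = some j) (hw_eq : w = x₁ ++ u ++ v ++ x₂)
    (hw'_eq : w' = x₁ ++ u ++ α ++ v ++ x₂) : InReg Sys j w' :=
  step _ hw hr ⟨x₁, x₂, hw_eq, hw'_eq⟩ ht

theorem delete (hw : InReg Sys i w) (hr : dRule u α v t ∈ Sys.R i)
    (ht : tarRegion i t = some j) (hw_eq : w = x₁ ++ u ++ α ++ v ++ x₂)
    (hw'_eq : w' = x₁ ++ u ++ v ++ x₂) : InReg Sys j w' :=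
  step _ hw hr ⟨x₁, x₂, hw_eq, hw'_eq⟩ ht

end InReg

/-- in the P system `Π₁` of Theorem 1 (5 nested membranes,
size (1,1,0;2,0,0)), simulating the rule `i : AB → AC`: starting from
`w₁ABw₂` in the skin membrane there is a derivation
`w₁ABw₂ ⟹ w₁AP¹Bw₂ ⟹ w₁AP¹P²Bw₂ ⟹ w₁AP¹w₂ ⟹ w₁AP¹P³w₂ ⟹ w₁AP¹P³Cw₂ ⟹ w₁ACw₂`
through membranes 1→2→3→4→3→2→1, returning `w₁ACw₂` to the skin membrane. -/
theorem stmt11 {V : Type} (Sys : PSys V 5) (A B C P1 P2 P3 : V) (w1 w2 : List V)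
    (h1 : iRule [A] [P1] [] Tar.inn ∈ Sys.R 0)
    (h2 : iRule [P1] [P2] [] Tar.inn ∈ Sys.R 1)
    (h3 : dRule [] [P1, P3] [] Tar.out ∈ Sys.R 1)
    (h4 : dRule [] [P2, B] [] Tar.inn ∈ Sys.R 2)
    (h5 : iRule [P3] [C] [] Tar.out ∈ Sys.R 2)
    (h6 : iRule [P1] [P3] [] Tar.out ∈ Sys.R 3)
    (h0 : InReg Sys 0 (w1 ++ [A, B] ++ w2)) :
    InReg Sys 1 (w1 ++ [A, P1, B] ++ w2) ∧
    InReg Sys 2 (w1 ++ [A, P1, P2, B] ++ w2) ∧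
    InReg Sys 3 (w1 ++ [A, P1] ++ w2) ∧
    InReg Sys 2 (w1 ++ [A, P1, P3] ++ w2) ∧
    InReg Sys 1 (w1 ++ [A, P1, P3, C] ++ w2) ∧
    InReg Sys 0 (w1 ++ [A, C] ++ w2) := by
  have s1 : InReg Sys 1 (w1 ++ [A, P1, B] ++ w2) :=
    h0.insert (x₁ := w1) (x₂ := B :: w2) h1 rfl (by simp) (by simp)
  have s2 : InReg Sys 2 (w1 ++ [A, P1, P2, B] ++ w2) :=
    s1.insert (x₁ := w1 ++ [A]) (x₂ := B :: w2) h2 rfl (by simp) (by simp)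
  have s3 : InReg Sys 3 (w1 ++ [A, P1] ++ w2) :=
    s2.delete (x₁ := w1 ++ [A, P1]) (x₂ := w2) h4 rfl (by simp) (by simp)
  have s4 : InReg Sys 2 (w1 ++ [A, P1, P3] ++ w2) :=
    s3.insert (x₁ := w1 ++ [A]) (x₂ := w2) h6 rfl (by simp) (by simp)
  have s5 : InReg Sys 1 (w1 ++ [A, P1, P3, C] ++ w2) :=
    s4.insert (x₁ := w1 ++ [A, P1]) (x₂ := w2) h5 rfl (by simp) (by simp)
  exact ⟨s1, s2, s3, s4, s5,
    s5.delete (x₁ := w1 ++ [A]) (x₂ := C :: w2) h3 rfl (by simp) (by simp)⟩
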